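/- arXiv:1801.00702 — 2 statements merged into one kernel-verified Lean document; each statement's English description precedes it below -/
import Mathlib

section
/- (Monotonicity) Let Ω be a finite ground set partitioned into a known part Θ ⊆ Ω and the unknown part X = Ω \ Θ, let D₁ and D₂ be two D numbers on Ω with non-exclusiveness functions u₁ and u₂ respectively. If for every subset A ⊆ Ω the belief interval of A under D₁ is contained in the belief interval of A under D₂, i.e., Bel_{D₂}(A) ≤ Bel_{D₁}(A) and Pl_{D₁}(A) ≤ Pl_{D₂}(A), then KU(D₁) ≤ KU(D₂) and Pl_{D₁}(X) ≤ Pl_{D₂}(X) (so the unknown uncertainties satisfy UU(D₁) ≤ UU(D₂)). -/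
open Finset

variable {Ω : Type*} [Fintype Ω] [DecidableEq Ω]

/-- A D number on a finite ground set `Ω`: `D ∅ = 0`, nonnegative, sums to 1. -/
def IsDNumber (D : Finset Ω → ℝ) : Prop :=
  D ∅ = 0 ∧ (∀ B : Finset Ω, 0 ≤ D B) ∧ ∑ B : Finset Ω, D B = 1

/-- A non-exclusiveness function on `Ω`. -/
def IsNonExclusive (u : Finset Ω → Finset Ω → ℝ) : Prop :=
  (∀ A B : Finset Ω, 0 ≤ u A B ∧ u A B ≤ 1) ∧
  (∀ A B : Finset Ω, u A B = u B A) ∧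
  (∀ A B : Finset Ω, (A ∩ B).Nonempty → u A B = 1)

/-- Belief measure: `Bel(A) = Σ_{B ⊆ A} D(B)`. -/
def Bel (D : Finset Ω → ℝ) (A : Finset Ω) : ℝ :=
  ∑ B ∈ A.powerset, D B

/-- Plausibility measure: `Pl(A) = Σ_{B ⊆ Ω} u(B,A)·D(B)`. -/
def Pl (u : Finset Ω → Finset Ω → ℝ) (D : Finset Ω → ℝ) (A : Finset Ω) : ℝ :=
  ∑ B : Finset Ω, u B A * D B

/-- Known uncertainty: `KU(D) = Σ_{θ ∈ Θ} [1 − √(Bel({θ})² + (Pl({θ}) − 1)²)]`. -/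
noncomputable def KU (u : Finset Ω → Finset Ω → ℝ) (D : Finset Ω → ℝ) (Θ : Finset Ω) : ℝ :=
  ∑ θ ∈ Θ, (1 - Real.sqrt ((Bel D {θ}) ^ 2 + (Pl u D {θ} - 1) ^ 2))

/-- Monotonicity: if every belief interval under `D₁` is contained in the
corresponding belief interval under `D₂`, then `KU(D₁) ≤ KU(D₂)` and
`Pl_{D₁}(X) ≤ Pl_{D₂}(X)` with `X = Ω \ Θ`. -/
theorem TU_monotonicity (D₁ D₂ : Finset Ω → ℝ) (u₁ u₂ : Finset Ω → Finset Ω → ℝ)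
    (hD₁ : IsDNumber D₁) (hD₂ : IsDNumber D₂)
    (hu₁ : IsNonExclusive u₁) (hu₂ : IsNonExclusive u₂) (Θ : Finset Ω)
    (hsub : ∀ A : Finset Ω, Bel D₂ A ≤ Bel D₁ A ∧ Pl u₁ D₁ A ≤ Pl u₂ D₂ A) :
    KU u₁ D₁ Θ ≤ KU u₂ D₂ Θ ∧
      Pl u₁ D₁ (Finset.univ \ Θ) ≤ Pl u₂ D₂ (Finset.univ \ Θ) := by
  have hBelnn : ∀ A, (0:ℝ) ≤ Bel D₂ A := fun A =>
    Finset.sum_nonneg fun B _ => hD₂.2.1 B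
  have hPlle : ∀ A, Pl u₂ D₂ A ≤ 1 := by
    intro A
    calc Pl u₂ D₂ A ≤ ∑ B : Finset Ω, D₂ B := by
          apply Finset.sum_le_sum
          intro B _
          have := (hu₂.1 B A).2
          nlinarith [hD₂.2.1 B]
      _ = 1 := hD₂.2.2
  refine ⟨?_, (hsub _).2⟩
  apply Finset.sum_le_sum
  intro θ _
  have h1 := (hsub {θ}).1
  have h2 := (hsub {θ}).2
  have hb := hBelnn {θ}
  have hp := hPlle {θ}
  have : Real.sqrt ((Bel D₂ {θ}) ^ 2 + (Pl u₂ D₂ {θ} - 1) ^ 2) ≤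
      Real.sqrt ((Bel D₁ {θ}) ^ 2 + (Pl u₁ D₁ {θ} - 1) ^ 2) := by
    apply Real.sqrt_le_sqrt
    nlinarith
  linarith
end

section
/- (Generalized set consistency) Let Ω be a finite ground set partitioned into a known part Θ ⊆ Ω and the unknown part X = Ω \ Θ, let D be a D number on Ω and u a non-exclusiveness function on Ω. Suppose there exists a set A ⊆ Θ with at least two elements such that D(A) = 1 (so D(B) = 0 for all B ≠ A). Then KU(D) = |A| + Σ_{θ ∈ Θ \ A} u({θ}, A); in particular KU(D) grows with the cardinality |A|. -/
open Finset

variable {Ω : Type*} [Fintype Ω] [DecidableEq Ω]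

/-- Generalized set consistency: if `A ⊆ Θ`, `|A| ≥ 2` and `D(A) = 1`, then
`KU(D) = |A| + Σ_{θ ∈ Θ \ A} u({θ}, A)`. -/
theorem generalized_set_consistency (D : Finset Ω → ℝ)
    (u : Finset Ω → Finset Ω → ℝ) (hD : IsDNumber D) (hu : IsNonExclusive u)
    (Θ A : Finset Ω) (hAΘ : A ⊆ Θ) (hcard : 2 ≤ A.card) (hA : D A = 1) :
    KU u D Θ = (A.card : ℝ) + ∑ θ ∈ Θ \ A, u {θ} A := by
  obtain ⟨hD0, hDnn, hDsum⟩ := hD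
  obtain ⟨hu01, husymm, huint⟩ := hu
  have hzero : ∀ B : Finset Ω, B ≠ A → D B = 0 := by
    intro B hB
    have h1 : ∑ C ∈ (Finset.univ : Finset (Finset Ω)).erase A, D C = 0 := by
      have := Finset.add_sum_erase Finset.univ D (Finset.mem_univ A)
      rw [hDsum, hA] at this
      linarith
    have := (Finset.sum_eq_zero_iff_of_nonneg (fun C _ => hDnn C)).mp h1 B
      (Finset.mem_erase.mpr ⟨hB, Finset.mem_univ B⟩)
    exact this
  have hBel : ∀ θ : Ω, Bel D {θ} = 0 := by
    intro θ
    apply Finset.sum_eq_zero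
    intro B hB
    apply hzero
    intro h
    have := Finset.mem_powerset.mp hB
    rw [h] at this
    have := Finset.card_le_card this
    simp at this
    omega
  have hPl : ∀ θ : Ω, Pl u D {θ} = u {θ} A := by
    intro θ
    rw [Pl, Finset.sum_eq_single A]
    · rw [hA, mul_one, husymm]
    · intro B _ hB; rw [hzero B hB, mul_zero]
    · intro h; exact absurd (Finset.mem_univ A) h
  have hterm : ∀ θ ∈ Θ, (1 - Real.sqrt ((Bel D {θ}) ^ 2 + (Pl u D {θ} - 1) ^ 2))
      = if θ ∈ A then 1 else u {θ} A := by
    intro θ _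
    rw [hBel, hPl]
    have h01 := hu01 {θ} A
    by_cases hθ : θ ∈ A
    · rw [huint {θ} A ⟨θ, by simp [hθ]⟩]
      simp
    · have : Real.sqrt ((0:ℝ) ^ 2 + (u {θ} A - 1) ^ 2) = 1 - u {θ} A := by
        rw [zero_pow (by norm_num), zero_add, Real.sqrt_sq_eq_abs,
          abs_of_nonpos (by linarith [h01.2])]
        ring
      rw [this, if_neg hθ]
      ring
  rw [KU, Finset.sum_congr rfl hterm]
  rw [← Finset.sum_sdiff hAΘ]
  have h1 : ∑ θ ∈ Θ \ A, (if θ ∈ A then (1:ℝ) else u {θ} A) = ∑ θ ∈ Θ \ A, u {θ} A := by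
    apply Finset.sum_congr rfl
    intro θ hθ
    simp [(Finset.mem_sdiff.mp hθ).2]
  have h2 : ∑ θ ∈ A, (if θ ∈ A then (1:ℝ) else u {θ} A) = (A.card : ℝ) := by
    rw [Finset.sum_congr rfl (fun θ hθ => if_pos hθ)]
    simp
  rw [h1, h2, add_comm]
end
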